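/- arXiv:1203.4188 — 2 statements merged into one kernel-verified Lean document; each statement's English description precedes it below -/
import Mathlib

section
/- Let n ≥ 2r and let ℬ ⊆ [n]^(r) be a maximal left-compressed intersecting family. Then ℬ ∩ [2r]^(r) is a maximal left-compressed intersecting subfamily of [2r]^(r). -/
open Finset

/-- The ij-compression of a finite set: replace j by i if possible. -/
def comp (i j : ℕ) (A : Finset ℕ) : Finset ℕ :=
  if j ∈ A ∧ i ∉ A then insert i (A.erase j) else A

/-- The ij-compression of a family of sets. -/
def compFam (i j : ℕ) (𝒜 : Finset (Finset ℕ)) : Finset (Finset ℕ) :=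
  (𝒜.filter (fun A => comp i j A ∈ 𝒜)) ∪
    ((𝒜.filter (fun A => comp i j A ∉ 𝒜)).image (comp i j))

/-- A family is intersecting if any two members meet. -/
def IsIntersecting (𝒜 : Finset (Finset ℕ)) : Prop :=
  ∀ A ∈ 𝒜, ∀ B ∈ 𝒜, (A ∩ B).Nonempty

/-- A family is left-compressed if it is invariant under all ij-compressions, i < j. -/
def LeftCompressed (𝒜 : Finset (Finset ℕ)) : Prop :=
  ∀ i j : ℕ, 1 ≤ i → i < j → compFam i j 𝒜 = 𝒜

/-- The compression order: same size and the k-th smallest element of `A` is at most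
the k-th smallest element of `B`. -/
def domLE (A B : Finset ℕ) : Prop :=
  A.card = B.card ∧ ∀ (k : ℕ) (a b : ℕ), (A.sort (· ≤ ·))[k]? = some a →
    (B.sort (· ≤ ·))[k]? = some b → a ≤ b

/-- `A ≺ G` : `A` is generated by `G`, i.e. `|G| ≤ |A|` and the k-th smallest element
of `A` is at most the k-th smallest element of `G` for `k ≤ |G|`. -/
def prec (A G : Finset ℕ) : Prop :=
  G.card ≤ A.card ∧ ∀ (k : ℕ) (a g : ℕ), (A.sort (· ≤ ·))[k]? = some a →
    (G.sort (· ≤ ·))[k]? = some g → a ≤ g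

/-- The r-element subsets of [n] = {1, ..., n}. -/
def uniformOn (n r : ℕ) : Finset (Finset ℕ) := (Icc 1 n).powersetCard r

/-- The family ⟨𝒢⟩_r^n generated by 𝒢 under inclusion. -/
def genSub (r n : ℕ) (𝒢 : Finset (Finset ℕ)) : Finset (Finset ℕ) :=
  (uniformOn n r).filter (fun A => ∃ G ∈ 𝒢, G ⊆ A)

open Classical in
/-- The family ⟨𝒢⟩_r^n generated by 𝒢 under ≺. -/
noncomputable def genP (r n : ℕ) (𝒢 : Finset (Finset ℕ)) : Finset (Finset ℕ) :=
  (uniformOn n r).filter (fun A => ∃ G ∈ 𝒢, prec A G)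

/-- ℱ(X) : the members of ℱ meeting X. -/
def hitting (ℱ : Finset (Finset ℕ)) (X : Finset ℕ) : Finset (Finset ℕ) :=
  ℱ.filter (fun A => (A ∩ X).Nonempty)

/-- The star at 1 in [n]^(r). -/
def star (n r : ℕ) : Finset (Finset ℕ) := (uniformOn n r).filter (fun A => 1 ∈ A)

/-- A maximal left-compressed intersecting subfamily of [n]^(r). -/
def MaxLCI (n r : ℕ) (𝒜 : Finset (Finset ℕ)) : Prop :=
  𝒜 ⊆ uniformOn n r ∧ LeftCompressed 𝒜 ∧ IsIntersecting 𝒜 ∧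
    ∀ B ∈ uniformOn n r, B ∉ 𝒜 → ¬ IsIntersecting (insert B 𝒜)

/-- X is good for n and r. -/
def IsGood (n r : ℕ) (X : Finset ℕ) : Prop :=
  ∀ 𝒜 ⊆ uniformOn n r, LeftCompressed 𝒜 → IsIntersecting 𝒜 →
    (hitting 𝒜 X).card ≤ (hitting (star n r) X).card

/-!
Let `B ∈ [2r]^(r)` be outside `ℬ`. By maximality of `ℬ` some `A ∈ ℬ` misses `B`. The complement
`C = [2r] \ B` also has `r` elements, and every element of `A \ C` lies beyond `2r`, hence beyond
every element of `C \ A`; so `C` arises from `A` by compressions and lies in `ℬ ∩ [2r]^(r)`.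
Since `C` misses `B`, the family `ℬ ∩ [2r]^(r)` cannot be enlarged by `B`.
-/

lemma comp_of_mem_of_notMem {i j : ℕ} {A : Finset ℕ} (hj : j ∈ A) (hi : i ∉ A) :
    comp i j A = insert i (A.erase j) :=
  if_pos ⟨hj, hi⟩

lemma leftCompressed_iff {𝒜 : Finset (Finset ℕ)} :
    LeftCompressed 𝒜 ↔ ∀ i j : ℕ, 1 ≤ i → i < j → ∀ A ∈ 𝒜, comp i j A ∈ 𝒜 := by
  refine ⟨fun h i j hi hij A hA => ?_, fun h i j hi hij => ?_⟩
  · by_contra hc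
    have hmem : comp i j A ∈ compFam i j 𝒜 :=
      mem_union_right _ (mem_image_of_mem _ (mem_filter.2 ⟨hA, hc⟩))
    exact hc (h i j hi hij ▸ hmem)
  · rw [compFam, filter_true_of_mem (h i j hi hij),
      filter_false_of_mem (fun A hA hc => hc (h i j hi hij A hA)), image_empty, union_empty]

lemma LeftCompressed.comp_mem {𝒜 : Finset (Finset ℕ)} (h𝒜 : LeftCompressed 𝒜) {i j : ℕ}
    (hi : 1 ≤ i) (hij : i < j) {A : Finset ℕ} (hA : A ∈ 𝒜) : comp i j A ∈ 𝒜 :=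
  leftCompressed_iff.1 h𝒜 i j hi hij A hA

lemma LeftCompressed.inter {𝒜 ℬ : Finset (Finset ℕ)} (h𝒜 : LeftCompressed 𝒜)
    (hℬ : LeftCompressed ℬ) : LeftCompressed (𝒜 ∩ ℬ) :=
  leftCompressed_iff.2 fun _ _ hi hij _ hA =>
    mem_inter.2 ⟨h𝒜.comp_mem hi hij (mem_inter.1 hA).1, hℬ.comp_mem hi hij (mem_inter.1 hA).2⟩

lemma leftCompressed_uniformOn (n r : ℕ) : LeftCompressed (uniformOn n r) := by
  refine leftCompressed_iff.2 fun i j hi hij A hA => ?_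
  rw [uniformOn, mem_powersetCard] at hA ⊢
  unfold comp
  split_ifs with hc
  · obtain ⟨hjA, hiA⟩ := hc
    refine ⟨insert_subset ?_ ((erase_subset _ _).trans hA.1), ?_⟩
    · have hj := mem_Icc.1 (hA.1 hjA)
      exact mem_Icc.2 ⟨hi, hij.le.trans hj.2⟩
    · rw [card_insert_of_notMem (fun h => hiA (mem_of_mem_erase h)), card_erase_of_mem hjA,
        Nat.sub_add_cancel (card_pos.2 ⟨j, hjA⟩), hA.2]
  · exact hA

lemma uniformOn_mono {m n : ℕ} (h : m ≤ n) (r : ℕ) : uniformOn m r ⊆ uniformOn n r :=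
  powersetCard_mono (Icc_subset_Icc_right h)

/-- Each compression `comp c a` with `a ∈ A \ C`, `c ∈ C \ A` moves `A` one element closer
to `C`. -/
theorem LeftCompressed.mem_of_forall_sdiff_lt {ℬ : Finset (Finset ℕ)} (hℬ : LeftCompressed ℬ)
    {C : Finset ℕ} (hC : ∀ c ∈ C, 1 ≤ c) {A : Finset ℕ} (hA : A ∈ ℬ) (hcard : A.card = C.card)
    (hlt : ∀ a ∈ A \ C, ∀ c ∈ C \ A, c < a) : C ∈ ℬ := by
  obtain ⟨k, hk⟩ : ∃ k, (A \ C).card = k := ⟨_, rfl⟩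
  induction k generalizing A with
  | zero =>
    have hAC : A ⊆ C := sdiff_eq_empty_iff_subset.1 (card_eq_zero.1 hk)
    exact eq_of_subset_of_card_le hAC hcard.ge ▸ hA
  | succ k ih =>
    obtain ⟨a, ha⟩ := card_pos.1 (hk.trans_gt k.succ_pos)
    obtain ⟨c, hc⟩ := card_pos.1 ((card_sdiff_comm hcard).symm.trans hk |>.trans_gt k.succ_pos)
    have ha' := mem_sdiff.1 ha
    have hc' := mem_sdiff.1 hc
    have hA' : insert c (A.erase a) ∈ ℬ :=
      comp_of_mem_of_notMem ha'.1 hc'.2 ▸ hℬ.comp_mem (hC c hc'.1) (hlt a ha c hc) hA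
    have hsdiff : insert c (A.erase a) \ C = (A \ C).erase a := by
      rw [insert_sdiff_of_mem _ hc'.1, erase_sdiff_comm]
    refine ih hA' ?_ (fun x hx y hy => hlt x ?_ y ?_) ?_
    · rw [card_insert_of_notMem (fun h => hc'.2 (mem_of_mem_erase h)), card_erase_of_mem ha'.1,
        Nat.sub_add_cancel (card_pos.2 ⟨a, ha'.1⟩), hcard]
    · exact mem_of_mem_erase (hsdiff ▸ hx)
    · obtain ⟨hyC, hyA'⟩ := mem_sdiff.1 hy
      refine mem_sdiff.2 ⟨hyC, fun hyA => hyA' (mem_insert_of_mem (mem_erase.2 ⟨?_, hyA⟩))⟩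
      rintro rfl
      exact ha'.2 hyC
    · rw [hsdiff, card_erase_of_mem ha, hk, Nat.add_sub_cancel]

lemma card_Icc_sdiff {r : ℕ} {B : Finset ℕ} (hB : B ∈ uniformOn (2 * r) r) :
    (Icc 1 (2 * r) \ B).card = r := by
  obtain ⟨hBsub, hBcard⟩ := mem_powersetCard.1 hB
  rw [card_sdiff_of_subset hBsub, Nat.card_Icc, hBcard]
  omega

lemma LeftCompressed.Icc_sdiff_mem {ℬ : Finset (Finset ℕ)} (hℬ : LeftCompressed ℬ)
    {n r : ℕ} {A B : Finset ℕ} (hA : A ∈ ℬ) (hAn : A ∈ uniformOn n r)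
    (hB : B ∈ uniformOn (2 * r) r) (hAB : Disjoint A B) : Icc 1 (2 * r) \ B ∈ ℬ := by
  obtain ⟨hAsub, hAcard⟩ := mem_powersetCard.1 hAn
  refine hℬ.mem_of_forall_sdiff_lt (fun c hc => (mem_Icc.1 (mem_sdiff.1 hc).1).1) hA
    (by rw [hAcard, card_Icc_sdiff hB]) fun a ha c hc => ?_
  obtain ⟨haA, haC⟩ := mem_sdiff.1 ha
  have ha1 : 1 ≤ a := (mem_Icc.1 (hAsub haA)).1
  have hc2r : c ≤ 2 * r := (mem_Icc.1 (mem_sdiff.1 (mem_sdiff.1 hc).1).1).2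
  have ha2r : 2 * r < a := by
    by_contra! h
    exact haC (mem_sdiff.2 ⟨mem_Icc.2 ⟨ha1, h⟩, disjoint_left.1 hAB haA⟩)
  omega

lemma isIntersecting_insert {𝒜 : Finset (Finset ℕ)} {B : Finset ℕ} :
    IsIntersecting (insert B 𝒜) ↔
      B.Nonempty ∧ (∀ A ∈ 𝒜, (A ∩ B).Nonempty) ∧ IsIntersecting 𝒜 := by
  simp only [IsIntersecting, forall_mem_insert, inter_self]
  refine ⟨fun ⟨⟨hB, _⟩, h⟩ => ⟨hB, fun A hA => (h A hA).1, fun A hA => (h A hA).2⟩,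
    fun ⟨hB, hmeet, h𝒜⟩ => ⟨⟨hB, fun A hA => inter_comm A B ▸ hmeet A hA⟩,
      fun A hA => ⟨hmeet A hA, h𝒜 A hA⟩⟩⟩

lemma MaxLCI.exists_disjoint {n r : ℕ} {ℬ : Finset (Finset ℕ)} (hℬ : MaxLCI n r ℬ)
    {B : Finset ℕ} (hB : B ∈ uniformOn n r) (hBℬ : B ∉ ℬ) (hBne : B.Nonempty) :
    ∃ A ∈ ℬ, Disjoint A B := by
  obtain ⟨-, -, hInt, hmax⟩ := hℬ
  replace hmax := hmax B hB hBℬ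
  rw [isIntersecting_insert] at hmax
  simp only [hBne, hInt, and_true, true_and, not_forall, exists_prop] at hmax
  obtain ⟨A, hA, hAB⟩ := hmax
  exact ⟨A, hA, not_not.1 (mt not_disjoint_iff_nonempty_inter.1 hAB)⟩

theorem stmt7 (n r : ℕ) (hn : 2 * r ≤ n) (ℬ : Finset (Finset ℕ))
    (hℬ : MaxLCI n r ℬ) : MaxLCI (2 * r) r (ℬ ∩ uniformOn (2 * r) r) := by
  have ⟨hsub, hLC, hInt, _⟩ := hℬ
  refine ⟨inter_subset_right, hLC.inter (leftCompressed_uniformOn _ _),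
    fun A hA B hB => hInt A (mem_inter.1 hA).1 B (mem_inter.1 hB).1, fun B hB hB' hins => ?_⟩
  obtain ⟨hBne, hmeet, -⟩ := isIntersecting_insert.1 hins
  obtain ⟨A, hA, hAB⟩ := hℬ.exists_disjoint (uniformOn_mono hn r hB)
    (fun h => hB' (mem_inter.2 ⟨h, hB⟩)) hBne
  have hC : Icc 1 (2 * r) \ B ∈ ℬ ∩ uniformOn (2 * r) r :=
    mem_inter.2 ⟨hLC.Icc_sdiff_mem hA (hsub hA) hB hAB,
      mem_powersetCard.2 ⟨sdiff_subset, card_Icc_sdiff hB⟩⟩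
  simpa [sdiff_inter_self] using hmeet _ hC
end

section
/- Let r ≥ 3, n ≥ 2r, and X = {2, 3, k} with r + 2 ≤ k ≤ n. Let ℬ = {A ∈ [n]^(r) : |A ∩ {1,2,3}| ≥ 2} (the family generated by {23}, i.e., all r-sets containing at least two of 1, 2, 3). Then ℬ is a left-compressed intersecting family and |ℬ(X)| = C(n−2, r−2) + 2·C(n−3, r−2) > |𝒮(X)|, where 𝒮 is the star at 1. Hence X = {2,3,k} is not good. -/
/-!
The family `ℬ` consists of the `r`-sets meeting the initial segment `{1, 2, 3}` in at least two
points. An `ij`-compression can only enlarge the trace of a set on an initial segment, so `ℬ` is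
left-compressed; two 2-subsets of a 3-set meet, so `ℬ` is intersecting. Every member of `ℬ`
contains 2 or 3, hence `ℬ(X) = ℬ`, which is counted by splitting according to `A ∩ {1, 2, 3}`.
On the other side `|𝒮(X)| = C(n-1, r-1) - C(n-4, r-1) = C(n-2, r-2) + C(n-3, r-2) + C(n-4, r-2)`
by Pascal's rule, and this falls short of `|ℬ|` by `C(n-3, r-2) - C(n-4, r-2) = C(n-4, r-3) > 0`.
-/

open Finset

lemma card_filter_subset_disjoint_powersetCard {α : Type*} [DecidableEq α]
    {s t u : Finset α} {r : ℕ} (hts : t ⊆ s) (htu : Disjoint t u) (htr : #t ≤ r) :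
    #((s.powersetCard r).filter fun A => t ⊆ A ∧ Disjoint u A)
      = (#(s \ (t ∪ u))).choose (r - #t) := by
  rw [← card_powersetCard]
  symm
  refine card_bij' (fun B _ => B ∪ t) (fun A _ => A \ t) ?_ ?_ ?_ ?_
  · intro B hB
    rw [mem_powersetCard] at hB
    have hBt : Disjoint B t := by grind [disjoint_left]
    simp only [mem_filter, mem_powersetCard]
    refine ⟨⟨by grind, ?_⟩, subset_union_right, by grind [disjoint_left]⟩
    rw [card_union_of_disjoint hBt, hB.2]
    omega
  · intro A hA
    simp only [mem_filter, mem_powersetCard] at hA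
    rw [mem_powersetCard, card_sdiff_of_subset hA.2.1, hA.1.2]
    exact ⟨by grind [disjoint_left], rfl⟩
  · intro B hB
    rw [mem_powersetCard] at hB
    grind [disjoint_left]
  · intro A hA
    exact sdiff_union_of_subset (mem_filter.1 hA).2.1

lemma card_inter_le_card_comp_inter (i j t : ℕ) (hi : 1 ≤ i) (hij : i < j) (A : Finset ℕ) :
    #(A ∩ Icc 1 t) ≤ #(comp i j A ∩ Icc 1 t) := by
  unfold comp
  split_ifs with h
  · by_cases hjt : j ≤ t
    · have : insert i (A.erase j) ∩ Icc 1 t = insert i ((A ∩ Icc 1 t).erase j) := by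
        ext x; simp only [mem_inter, mem_insert, mem_erase, mem_Icc]; grind
      have hjA : j ∈ A ∩ Icc 1 t := mem_inter.2 ⟨h.1, mem_Icc.2 ⟨by omega, hjt⟩⟩
      rw [this, card_insert_of_notMem (by simp [h.2]), card_erase_of_mem hjA]
      have : 0 < #(A ∩ Icc 1 t) := card_pos.2 ⟨j, hjA⟩
      omega
    · refine card_le_card fun x hx => ?_
      simp only [mem_inter, mem_insert, mem_erase, mem_Icc] at hx ⊢
      grind
  · rfl

lemma comp_mem_uniformOn {n r i j : ℕ} (hi : 1 ≤ i) (hij : i < j) {A : Finset ℕ}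
    (hA : A ∈ uniformOn n r) : comp i j A ∈ uniformOn n r := by
  rw [uniformOn, mem_powersetCard] at hA ⊢
  unfold comp
  split_ifs with h
  · have hjn : j ≤ n := (mem_Icc.1 (hA.1 h.1)).2
    refine ⟨fun x hx => ?_, ?_⟩
    · rcases mem_insert.1 hx with rfl | hx
      · exact mem_Icc.2 ⟨hi, by omega⟩
      · exact hA.1 (mem_of_mem_erase hx)
    · rw [card_insert_of_notMem (fun hi' => h.2 (mem_of_mem_erase hi')),
        card_erase_of_mem h.1, hA.2]
      have : 0 < r := hA.2 ▸ card_pos.2 ⟨j, h.1⟩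
      omega
  · exact hA

lemma compFam_eq_self {i j : ℕ} {𝒜 : Finset (Finset ℕ)} (h : ∀ A ∈ 𝒜, comp i j A ∈ 𝒜) :
    compFam i j 𝒜 = 𝒜 := by
  rw [compFam, filter_true_of_mem h, filter_false_of_mem fun A hA hc => hc (h A hA),
    image_empty, union_empty]

lemma leftCompressed_filter_le_card_inter_Icc (n r m t : ℕ) :
    LeftCompressed ((uniformOn n r).filter fun A => m ≤ #(A ∩ Icc 1 t)) := by
  intro i j hi hij
  refine compFam_eq_self fun A hA => ?_
  rw [mem_filter] at hA ⊢
  exact ⟨comp_mem_uniformOn hi hij hA.1,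
    hA.2.trans (card_inter_le_card_comp_inter i j t hi hij A)⟩

lemma isIntersecting_filter_le_card_inter (𝒜 : Finset (Finset ℕ)) {T : Finset ℕ} {m : ℕ}
    (hT : #T < 2 * m) : IsIntersecting (𝒜.filter fun A => m ≤ #(A ∩ T)) := by
  intro A hA B hB
  rw [mem_filter] at hA hB
  obtain ⟨x, hx⟩ := inter_nonempty_of_card_lt_card_add_card (inter_subset_right (s₁ := A))
    (inter_subset_right (s₁ := B)) (s := T) (by omega)
  exact ⟨x, by grind⟩

lemma two_le_card_inter_triple_iff {a b c : ℕ} (hab : a ≠ b) (hac : a ≠ c) (hbc : b ≠ c)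
    (A : Finset ℕ) : 2 ≤ #(A ∩ {a, b, c}) ↔
      (b ∈ A ∧ c ∈ A) ∨ (a ∈ A ∧ b ∈ A ∧ c ∉ A) ∨ (a ∈ A ∧ c ∈ A ∧ b ∉ A) := by
  have : A ∩ {a, b, c} = ({a, b, c} : Finset ℕ).filter (· ∈ A) := by
    ext x; simp [and_comm]
  rw [this]
  by_cases ha : a ∈ A <;> by_cases hb : b ∈ A <;> by_cases hc : c ∈ A <;>
    simp [filter_insert, filter_singleton, ha, hb, hc, hab, hac, hbc]

lemma card_uniformOn_filter_subset_disjoint {n r : ℕ} {t u : Finset ℕ} (ht : t ⊆ Icc 1 n)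
    (hu : u ⊆ Icc 1 n) (htu : Disjoint t u) (htr : #t ≤ r) :
    #((uniformOn n r).filter fun A => t ⊆ A ∧ Disjoint u A) = (n - #t - #u).choose (r - #t) := by
  rw [uniformOn, card_filter_subset_disjoint_powersetCard ht htu htr,
    card_sdiff_of_subset (union_subset ht hu), card_union_of_disjoint htu, Nat.card_Icc,
    Nat.add_sub_cancel, Nat.sub_sub]

lemma card_filter_two_le_card_inter_triple {n r a b c : ℕ} (hr : 2 ≤ r)
    (hab : a ≠ b) (hac : a ≠ c) (hbc : b ≠ c) (habc : {a, b, c} ⊆ Icc 1 n) :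
    #((uniformOn n r).filter fun A => 2 ≤ #(A ∩ {a, b, c}))
      = (n - 2).choose (r - 2) + 2 * (n - 3).choose (r - 2) := by
  have hsplit : (uniformOn n r).filter (fun A => 2 ≤ #(A ∩ {a, b, c}))
      = (uniformOn n r).filter (fun A => {b, c} ⊆ A ∧ Disjoint ∅ A)
        ∪ ((uniformOn n r).filter (fun A => {a, b} ⊆ A ∧ Disjoint {c} A)
          ∪ (uniformOn n r).filter (fun A => {a, c} ⊆ A ∧ Disjoint {b} A)) := by
    simp only [← filter_or, two_le_card_inter_triple_iff hab hac hbc, insert_subset_iff,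
      singleton_subset_iff, disjoint_singleton_left, disjoint_empty_left]
    grind
  have hsub {x y : ℕ} (hx : x ∈ ({a, b, c} : Finset ℕ)) (hy : y ∈ ({a, b, c} : Finset ℕ)) :
      {x, y} ⊆ Icc 1 n := insert_subset (habc hx) (singleton_subset_iff.2 (habc hy))
  have hmem {x : ℕ} (hx : x ∈ ({a, b, c} : Finset ℕ)) : {x} ⊆ Icc 1 n :=
    singleton_subset_iff.2 (habc hx)
  rw [hsplit, card_union_of_disjoint, card_union_of_disjoint,
    card_uniformOn_filter_subset_disjoint (hsub (by simp) (by simp)) (empty_subset _)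
      (disjoint_empty_right _) (by rw [card_pair hbc]; exact hr),
    card_uniformOn_filter_subset_disjoint (hsub (by simp) (by simp)) (hmem (by simp))
      (by simp [hac.symm, hbc.symm]) (by rw [card_pair hab]; exact hr),
    card_uniformOn_filter_subset_disjoint (hsub (by simp) (by simp)) (hmem (by simp))
      (by simp [hab.symm, hbc]) (by rw [card_pair hac]; exact hr)]
  · simp only [card_pair hab, card_pair hac, card_pair hbc, card_singleton, card_empty,
      Nat.sub_zero, Nat.sub_sub]
    ring
  all_goals
    simp only [disjoint_filter, disjoint_union_right, insert_subset_iff, singleton_subset_iff,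
      disjoint_singleton_left]
    grind

lemma card_hitting_star_add_choose {n r : ℕ} {X : Finset ℕ} (hn : 1 ≤ n) (hr : 1 ≤ r)
    (hX : X ⊆ Icc 1 n) (h1X : 1 ∉ X) :
    #(hitting (star n r) X) + (n - 1 - #X).choose (r - 1) = (n - 1).choose (r - 1) := by
  have h1 : {1} ⊆ Icc 1 n := singleton_subset_iff.2 (mem_Icc.2 ⟨le_rfl, hn⟩)
  have hcount {u : Finset ℕ} (hu : u ⊆ Icc 1 n) (h1u : Disjoint {1} u) :
      #((uniformOn n r).filter fun A => {1} ⊆ A ∧ Disjoint u A) = (n - 1 - #u).choose (r - 1) := by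
    rw [card_uniformOn_filter_subset_disjoint h1 hu h1u (by rwa [card_singleton]), card_singleton]
  have hdisj (A : Finset ℕ) : Disjoint X A ↔ ¬(A ∩ X).Nonempty := by
    rw [not_nonempty_iff_eq_empty, inter_comm, disjoint_iff_inter_eq_empty]
  have hsplit : star n r = hitting (star n r) X
      ∪ (uniformOn n r).filter (fun A => {1} ⊆ A ∧ Disjoint X A) := by
    ext A
    simp only [_root_.star, hitting, mem_union, mem_filter, singleton_subset_iff, hdisj]
    tauto
  have hstar : star n r = (uniformOn n r).filter (fun A => {1} ⊆ A ∧ Disjoint ∅ A) := by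
    simp only [_root_.star, singleton_subset_iff, disjoint_empty_left, and_true]
  calc #(hitting (star n r) X) + (n - 1 - #X).choose (r - 1) = #(star n r) := by
        rw [← hcount hX (disjoint_singleton_left.2 h1X), ← card_union_of_disjoint, ← hsplit]
        refine disjoint_left.2 fun A hA hA' => ?_
        exact (hdisj A).1 (mem_filter.1 hA').2.2 (mem_filter.1 hA).2
    _ = (n - 1).choose (r - 1) := by
        rw [hstar, hcount (empty_subset _) (disjoint_empty_right _), card_empty, Nat.sub_zero]

lemma choose_pred_lt {n r : ℕ} (hr : 3 ≤ r) (hrn : r < n) :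
    (n - 1).choose (r - 1)
      < (n - 2).choose (r - 2) + 2 * (n - 3).choose (r - 2) + (n - 4).choose (r - 1) := by
  obtain ⟨s, rfl⟩ : ∃ s, r = s + 3 := ⟨r - 3, by omega⟩
  obtain ⟨m, rfl⟩ : ∃ m, n = m + 4 := ⟨n - 4, by omega⟩
  simp only [show m + 4 - 1 = m + 3 by omega, show m + 4 - 2 = m + 2 by omega,
    show m + 4 - 3 = m + 1 by omega, show m + 4 - 4 = m by omega,
    show s + 3 - 1 = s + 2 by omega, show s + 3 - 2 = s + 1 by omega]
  have hpos : 0 < m.choose s := Nat.choose_pos (by omega)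
  have h3 : (m + 3).choose (s + 2) = (m + 2).choose (s + 1) + (m + 2).choose (s + 2) :=
    Nat.choose_succ_succ' _ _
  have h2 : (m + 2).choose (s + 2) = (m + 1).choose (s + 1) + (m + 1).choose (s + 2) :=
    Nat.choose_succ_succ' _ _
  have h1 : (m + 1).choose (s + 2) = m.choose (s + 1) + m.choose (s + 2) :=
    Nat.choose_succ_succ' _ _
  have h1' : (m + 1).choose (s + 1) = m.choose s + m.choose (s + 1) :=
    Nat.choose_succ_succ' _ _
  omega

theorem stmt14_general (n r k : ℕ) (hr : 3 ≤ r) (hk : r + 2 ≤ k)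
    (hkn : k ≤ n) :
    LeftCompressed ((uniformOn n r).filter (fun A => 2 ≤ (A ∩ {1, 2, 3}).card)) ∧
    IsIntersecting ((uniformOn n r).filter (fun A => 2 ≤ (A ∩ {1, 2, 3}).card)) ∧
    (hitting ((uniformOn n r).filter (fun A => 2 ≤ (A ∩ {1, 2, 3}).card)) {2, 3, k}).card =
      Nat.choose (n - 2) (r - 2) + 2 * Nat.choose (n - 3) (r - 2) ∧
    (hitting (star n r) {2, 3, k}).card <
      (hitting ((uniformOn n r).filter (fun A => 2 ≤ (A ∩ {1, 2, 3}).card)) {2, 3, k}).card ∧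
    ¬ IsGood n r {2, 3, k} := by
  set ℬ := (uniformOn n r).filter (fun A => 2 ≤ #(A ∩ {1, 2, 3}))
  have hLC : LeftCompressed ℬ := by
    simpa only [show Icc 1 3 = ({1, 2, 3} : Finset ℕ) by rfl]
      using leftCompressed_filter_le_card_inter_Icc n r 2 3
  have hInt : IsIntersecting ℬ := isIntersecting_filter_le_card_inter _ (by decide)
  have hhit : hitting ℬ {2, 3, k} = ℬ := filter_true_of_mem fun A hA => by
    rcases (two_le_card_inter_triple_iff (by decide) (by decide) (by decide) A).1
      (mem_filter.1 hA).2 with ⟨h2, -⟩ | ⟨-, h2, -⟩ | ⟨-, h3, -⟩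
    exacts [⟨2, by simp [h2]⟩, ⟨2, by simp [h2]⟩, ⟨3, by simp [h3]⟩]
  have hcard : #(hitting ℬ {2, 3, k}) = (n - 2).choose (r - 2) + 2 * (n - 3).choose (r - 2) := by
    rw [hhit]
    exact card_filter_two_le_card_inter_triple (by omega) (by decide) (by decide) (by decide)
      (by intro x; simp only [mem_insert, mem_singleton, mem_Icc]; omega)
  have hstar := card_hitting_star_add_choose (n := n) (r := r) (X := {2, 3, k}) (by omega)
    (by omega) (by intro x; simp only [mem_insert, mem_singleton, mem_Icc]; omega)
    (by simp only [mem_insert, mem_singleton]; omega)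
  rw [card_eq_three.2 ⟨2, 3, k, by decide, by omega, by omega, rfl⟩,
    show n - 1 - 3 = n - 4 by omega] at hstar
  have hlt : #(hitting (star n r) {2, 3, k}) < #(hitting ℬ {2, 3, k}) := by
    have := choose_pred_lt hr (by omega : r < n)
    omega
  exact ⟨hLC, hInt, hcard, hlt, fun hgood => (hgood ℬ (filter_subset _ _) hLC hInt).not_gt hlt⟩

theorem stmt14 (n r k : ℕ) (hr : 3 ≤ r) (hn : 2 * r ≤ n) (hk : r + 2 ≤ k)
    (hkn : k ≤ n) :
    LeftCompressed ((uniformOn n r).filter (fun A => 2 ≤ (A ∩ {1, 2, 3}).card)) ∧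
    IsIntersecting ((uniformOn n r).filter (fun A => 2 ≤ (A ∩ {1, 2, 3}).card)) ∧
    (hitting ((uniformOn n r).filter (fun A => 2 ≤ (A ∩ {1, 2, 3}).card)) {2, 3, k}).card =
      Nat.choose (n - 2) (r - 2) + 2 * Nat.choose (n - 3) (r - 2) ∧
    (hitting (star n r) {2, 3, k}).card <
      (hitting ((uniformOn n r).filter (fun A => 2 ≤ (A ∩ {1, 2, 3}).card)) {2, 3, k}).card ∧
    ¬ IsGood n r {2, 3, k} :=
  stmt14_general n r k hr hk hkn
end
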